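/- arXiv:math/0508381 — 3 statements merged into one kernel-verified Lean document; each statement's English description precedes it below -/
import Mathlib

section
/- For fixed r with 0 < r < 2R, the scaled intersection volume α₂(r;R) is a strictly decreasing function of the dimension d. -/
/-!
Write `J d = ∫₀^{π/2} sin^d`. Wallis' recursion shows `c(d) = 1 / J d`, so `α₂` is the fraction
`(∫₀^a sin^d) / J d` of the mass of `sin^d` on `[0, π/2]` lying in `[0, a]`, with
`a = arccos (r / 2R) ∈ (0, π/2)`. Multiplying by one more factor `sin θ` lowers this fraction,
because `sin θ ≤ sin a` on `[0, a]` and `sin θ > sin a` on `(a, π/2]`.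
-/

open Real

/-- The scaled intersection volume of two `d`-dimensional balls of radius `R` at center
distance `r`, given by `α₂(r;R) = c(d) ∫₀^{arccos(r/(2R))} sin^d θ dθ` with
`c(d) = 2Γ(1+d/2)/(√π Γ((d+1)/2))`. -/
noncomputable def scaledIntersectionVol (d : ℕ) (r R : ℝ) : ℝ :=
  (2 * Real.Gamma (1 + d / 2) / (Real.sqrt π * Real.Gamma ((d + 1) / 2))) *
    ∫ θ in (0 : ℝ)..Real.arccos (r / (2 * R)), Real.sin θ ^ d

open intervalIntegral

lemma intervalIntegrable_sin_pow (d : ℕ) (a b : ℝ) :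
    IntervalIntegrable (fun θ => sin θ ^ d) MeasureTheory.volume a b :=
  (continuous_sin.pow d).intervalIntegrable a b

lemma integral_sin_pow_pos_of_le_pi (d : ℕ) {a b : ℝ} (ha : 0 ≤ a) (hab : a < b) (hb : b ≤ π) :
    0 < ∫ θ in a..b, sin θ ^ d :=
  intervalIntegral_pos_of_pos_on (intervalIntegrable_sin_pow d a b)
    (fun _ hθ => pow_pos (sin_pos_of_pos_of_lt_pi (ha.trans_lt hθ.1) (hθ.2.trans_le hb)) d) hab

lemma integral_sin_pow_succ_le_sin_mul (d : ℕ) {a : ℝ} (ha : 0 ≤ a) (ha' : a ≤ π / 2) :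
    ∫ θ in (0 : ℝ)..a, sin θ ^ (d + 1) ≤ sin a * ∫ θ in (0 : ℝ)..a, sin θ ^ d := by
  rw [← integral_const_mul]
  refine integral_mono_on ha (intervalIntegrable_sin_pow _ _ _)
    ((continuous_const.mul (continuous_sin.pow d)).intervalIntegrable _ _) fun θ hθ => ?_
  rw [pow_succ']
  exact mul_le_mul_of_nonneg_right
    (sin_le_sin_of_le_of_le_pi_div_two (by linarith [hθ.1, pi_pos]) ha' hθ.2)
    (pow_nonneg (sin_nonneg_of_nonneg_of_le_pi hθ.1 (by linarith [hθ.2, pi_pos])) d)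

lemma sin_mul_integral_sin_pow_lt (d : ℕ) {a b : ℝ} (ha : 0 ≤ a) (hab : a < b) (hb : b ≤ π / 2) :
    sin a * ∫ θ in a..b, sin θ ^ d < ∫ θ in a..b, sin θ ^ (d + 1) := by
  rw [← integral_const_mul]
  have hsin_pos : ∀ θ, a < θ → θ ≤ b → 0 < sin θ := fun θ h1 h2 =>
    sin_pos_of_pos_of_lt_pi (ha.trans_lt h1) (by linarith [pi_pos])
  refine integral_lt_integral_of_continuousOn_of_le_of_exists_lt hab
    (continuous_const.mul (continuous_sin.pow d)).continuousOn
    (continuous_sin.pow (d + 1)).continuousOn (fun θ hθ => ?_) ⟨b, ⟨hab.le, le_rfl⟩, ?_⟩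
  · rw [pow_succ']
    exact mul_le_mul_of_nonneg_right (sin_le_sin_of_le_of_le_pi_div_two
      (by linarith [pi_pos]) (hθ.2.trans hb) hθ.1.le)
      (pow_nonneg (hsin_pos θ hθ.1 hθ.2).le d)
  · rw [pow_succ']
    exact mul_lt_mul_of_pos_right
      (sin_lt_sin_of_lt_of_le_pi_div_two (by linarith [pi_pos]) hb hab)
      (pow_pos (hsin_pos b hab le_rfl) d)

lemma integral_sin_pow_succ_mul_lt (d : ℕ) {a b : ℝ} (ha : 0 < a) (hab : a < b)
    (hb : b ≤ π / 2) :
    (∫ θ in (0 : ℝ)..a, sin θ ^ (d + 1)) * (∫ θ in (0 : ℝ)..b, sin θ ^ d) <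
      (∫ θ in (0 : ℝ)..a, sin θ ^ d) * ∫ θ in (0 : ℝ)..b, sin θ ^ (d + 1) := by
  have hπ := pi_pos
  -- With `I, I'` the integrals of `sin^d, sin^(d+1)` over `[0, a]` and `M, M'` those over `[a, b]`,
  -- the claim reduces to `I' M < I M'`, and `I' M ≤ sin a · I M < I M'`.
  simp only [← integral_add_adjacent_intervals (intervalIntegrable_sin_pow _ 0 a)
    (intervalIntegrable_sin_pow _ a b)]
  have hlow := integral_sin_pow_succ_le_sin_mul d ha.le (by linarith)
  have hhigh := sin_mul_integral_sin_pow_lt d ha.le hab hb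
  have hI := integral_sin_pow_pos_of_le_pi d le_rfl ha (by linarith)
  have hM := integral_sin_pow_pos_of_le_pi d ha.le hab (by linarith)
  nlinarith [mul_le_mul_of_nonneg_right hlow hM.le, mul_lt_mul_of_pos_left hhigh hI]

lemma integral_sin_pow_add_two_zero_pi_div_two (d : ℕ) :
    ∫ θ in (0 : ℝ)..π / 2, sin θ ^ (d + 2) =
      (d + 1) / (d + 2) * ∫ θ in (0 : ℝ)..π / 2, sin θ ^ d := by
  simp [integral_sin_pow]

lemma integral_sin_pow_zero_pi_div_two (d : ℕ) :
    ∫ θ in (0 : ℝ)..π / 2, sin θ ^ d =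
      sqrt π * Gamma ((d + 1) / 2) / (2 * Gamma (1 + d / 2)) := by
  have hsqrt : sqrt π ≠ 0 := (sqrt_pos.2 pi_pos).ne'
  induction d using Nat.twoStepInduction with
  | zero =>
    simp only [pow_zero, integral_const, smul_eq_mul, Nat.cast_zero, zero_add, zero_div, add_zero,
      Gamma_one, Gamma_one_half_eq]
    field_simp
    rw [sq_sqrt pi_pos.le]
    ring
  | one =>
    have hΓ : Gamma (1 + 1 / 2) = sqrt π / 2 := by
      rw [add_comm, Gamma_add_one (by norm_num), Gamma_one_half_eq]; ring
    simp only [pow_one, integral_sin, cos_pi_div_two, cos_zero, Nat.cast_one, hΓ]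
    norm_num
    field_simp
  | more d ih _ =>
    have hΓ₁ : Gamma (1 + ((d + 2 : ℕ) : ℝ) / 2) = (1 + d / 2) * Gamma (1 + d / 2) := by
      rw [← Gamma_add_one (by positivity)]; push_cast; ring_nf
    have hΓ₂ : Gamma ((((d + 2 : ℕ) : ℝ) + 1) / 2) = ((d + 1) / 2) * Gamma ((d + 1) / 2) := by
      rw [← Gamma_add_one (by positivity)]; push_cast; ring_nf
    have : Gamma (1 + d / 2) ≠ 0 := (Gamma_pos_of_pos (by positivity)).ne'
    rw [integral_sin_pow_add_two_zero_pi_div_two, ih, hΓ₁, hΓ₂]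
    field_simp
    ring

lemma scaledIntersectionVol_eq_div (d : ℕ) (r R : ℝ) :
    scaledIntersectionVol d r R =
      (∫ θ in (0 : ℝ)..arccos (r / (2 * R)), sin θ ^ d) / ∫ θ in (0 : ℝ)..π / 2, sin θ ^ d := by
  rw [scaledIntersectionVol, integral_sin_pow_zero_pi_div_two, div_div_eq_mul_div]
  ring

lemma scaledIntersectionVol_succ_lt {r R : ℝ} (hr0 : 0 < r) (hr2 : r < 2 * R) (d : ℕ) :
    scaledIntersectionVol (d + 1) r R < scaledIntersectionVol d r R := by
  have hx0 : 0 < r / (2 * R) := div_pos hr0 (by linarith)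
  have hx1 : r / (2 * R) < 1 := (div_lt_one (by linarith)).2 hr2
  have hπ : 0 < π / 2 := by positivity
  rw [scaledIntersectionVol_eq_div, scaledIntersectionVol_eq_div,
    div_lt_div_iff₀ (integral_sin_pow_pos_of_le_pi _ le_rfl hπ (by linarith))
      (integral_sin_pow_pos_of_le_pi _ le_rfl hπ (by linarith))]
  exact integral_sin_pow_succ_mul_lt d (arccos_pos.2 hx1) (arccos_lt_pi_div_two.2 hx0) le_rfl

/-- For fixed `0 < r < 2R`, the scaled intersection volume `α₂(r;R)` is a strictly
decreasing function of the dimension `d ≥ 1`. -/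
theorem scaledIntersectionVol_strict_anti_in_dim
    (R r : ℝ) (hr0 : 0 < r) (hr2 : r < 2 * R) :
    ∀ d₁ d₂ : ℕ, 1 ≤ d₁ → d₁ < d₂ →
      scaledIntersectionVol d₂ r R < scaledIntersectionVol d₁ r R :=
  fun _ _ _ hlt =>
    strictAnti_nat_of_succ_lt (f := fun d => scaledIntersectionVol d r R)
      (scaledIntersectionVol_succ_lt hr0 hr2) hlt
end

section
/- In any dimension d ≥ 1, the scaled intersection volume satisfies α₂(r;R) ≤ 1 − r/(2R) for 0 ≤ r ≤ 2R, with equality when d = 1. -/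
open Real

private lemma sinPow_halfPi (n : ℕ) :
    ∫ θ in (0:ℝ)..(π/2), Real.sin θ ^ n =
      Real.sqrt π * Real.Gamma (((n:ℝ)+1)/2) / (2 * Real.Gamma ((n:ℝ)/2+1)) := by
  induction n using Nat.twoStepInduction with
  | zero =>
    have : ((0:ℕ):ℝ) = 0 := by norm_num
    rw [this]
    norm_num [Real.Gamma_one]
    rw [show (1:ℝ)/2 = 2⁻¹ by norm_num] at *
    rw [show Real.Gamma 2⁻¹ = Real.sqrt π from by
      rw [← Real.Gamma_one_half_eq]; norm_num]
    rw [Real.mul_self_sqrt pi_pos.le]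
  | one =>
    have h32 : Real.Gamma ((1:ℝ)/2 + 1) = (1/2) * Real.Gamma (1/2) := by
      rw [Real.Gamma_add_one (by norm_num)]
    simp only [pow_one, Nat.cast_one]
    rw [integral_sin]
    norm_num
    rw [show (3:ℝ)/2 = 1/2 + 1 by norm_num, h32, Real.Gamma_one_half_eq]
    have : Real.sqrt π > 0 := Real.sqrt_pos.mpr pi_pos
    field_simp
  | more n ih _ =>
    have h := integral_sin_pow (a := (0:ℝ)) (b := π/2) n
    rw [Real.sin_zero, Real.cos_pi_div_two] at h
    simp at h
    rw [h, ih]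
    have hg1 : Real.Gamma (((n:ℝ)+2+1)/2) = ((n:ℝ)+1)/2 * Real.Gamma (((n:ℝ)+1)/2) := by
      have : ((n:ℝ)+2+1)/2 = ((n:ℝ)+1)/2 + 1 := by ring
      rw [this, Real.Gamma_add_one (by positivity)]
    have hg2 : Real.Gamma (((n:ℝ)+2)/2+1) = ((n:ℝ)/2+1) * Real.Gamma ((n:ℝ)/2+1) := by
      have : ((n:ℝ)+2)/2+1 = ((n:ℝ)/2+1) + 1 := by ring
      rw [this, Real.Gamma_add_one (by positivity)]
    push_cast
    rw [hg1, hg2]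
    have hΓ : Real.Gamma ((n:ℝ)/2+1) ≠ 0 := (Real.Gamma_pos_of_pos (by positivity)).ne'
    field_simp

private lemma key_le (d : ℕ) (hd : 1 ≤ d) (x : ℝ) (hx0 : 0 ≤ x) (hx1 : x ≤ 1) :
    (2 * Real.Gamma (1 + (d:ℝ) / 2) / (Real.sqrt π * Real.Gamma (((d:ℝ) + 1) / 2))) *
      ∫ θ in (0:ℝ)..Real.arccos x, Real.sin θ ^ d ≤ 1 - x := by
  set c : ℝ := 2 * Real.Gamma (1 + (d:ℝ) / 2) / (Real.sqrt π * Real.Gamma (((d:ℝ) + 1) / 2))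
    with hc
  set a : ℝ := Real.arccos x with ha
  have ha0 : 0 ≤ a := Real.arccos_nonneg x
  have ha2 : a ≤ π / 2 := Real.arccos_le_pi_div_two.mpr hx0
  have hcos : Real.cos a = x := Real.cos_arccos (by linarith) hx1
  have hsina : 0 ≤ Real.sin a := Real.sin_nonneg_of_nonneg_of_le_pi ha0 (by linarith [pi_pos.le])
  have hcpos : 0 < c := by
    apply div_pos (by positivity)
    exact mul_pos (Real.sqrt_pos.mpr pi_pos) (Real.Gamma_pos_of_pos (by positivity))
  have hS : c * ∫ θ in (0:ℝ)..(π/2), Real.sin θ ^ d = 1 := by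
    rw [sinPow_halfPi d, hc]
    have h1 : Real.Gamma (((d:ℝ)+1)/2) ≠ 0 := (Real.Gamma_pos_of_pos (by positivity)).ne'
    have h2 : Real.Gamma ((d:ℝ)/2+1) ≠ 0 := (Real.Gamma_pos_of_pos (by positivity)).ne'
    have h3 : Real.sqrt π ≠ 0 := (Real.sqrt_pos.mpr pi_pos).ne'
    rw [show 1 + (d:ℝ)/2 = (d:ℝ)/2 + 1 by ring]
    field_simp
  -- integrability facts
  have hint : ∀ u v : ℝ, IntervalIntegrable (fun θ => Real.sin θ ^ d) MeasureTheory.volume u v :=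
    fun u v => (Continuous.pow (Real.continuous_sin) d).intervalIntegrable u v
  have hint' : ∀ u v : ℝ, IntervalIntegrable Real.sin MeasureTheory.volume u v :=
    fun u v => Real.continuous_sin.intervalIntegrable u v
  have hmono : ∀ θ₁ θ₂ : ℝ, 0 ≤ θ₁ → θ₁ ≤ θ₂ → θ₂ ≤ π/2 →
      Real.sin θ₁ ^ d ≤ Real.sin θ₂ ^ d := by
    intro θ₁ θ₂ h1 h2 h3
    have := Real.sin_le_sin_of_le_of_le_pi_div_two (by linarith [pi_pos.le]) h3 h2
    exact pow_le_pow_left₀ (Real.sin_nonneg_of_nonneg_of_le_pi h1 (by linarith [pi_pos.le])) this d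
  rcases le_or_gt (c * Real.sin a ^ (d - 1)) 1 with hcase | hcase
  · -- small a : compare on [0, a]
    have hpt : ∀ θ ∈ Set.Icc (0:ℝ) a, c * Real.sin θ ^ d ≤ Real.sin θ := by
      intro θ hθ
      have hθs : 0 ≤ Real.sin θ :=
        Real.sin_nonneg_of_nonneg_of_le_pi hθ.1 (by linarith [hθ.2, pi_pos.le])
      have hθle : Real.sin θ ≤ Real.sin a :=
        Real.sin_le_sin_of_le_of_le_pi_div_two (by linarith [hθ.1, pi_pos.le]) ha2 hθ.2
      have hpow : Real.sin θ ^ (d-1) ≤ Real.sin a ^ (d-1) := pow_le_pow_left₀ hθs hθle _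
      calc c * Real.sin θ ^ d = (c * Real.sin θ ^ (d-1)) * Real.sin θ := by
            rw [mul_assoc, ← pow_succ, Nat.sub_add_cancel hd]
        _ ≤ 1 * Real.sin θ := by
            apply mul_le_mul_of_nonneg_right _ hθs
            calc c * Real.sin θ ^ (d-1) ≤ c * Real.sin a ^ (d-1) := by
                  exact mul_le_mul_of_nonneg_left hpow hcpos.le
              _ ≤ 1 := hcase
        _ = Real.sin θ := one_mul _
    have : c * ∫ θ in (0:ℝ)..a, Real.sin θ ^ d ≤ ∫ θ in (0:ℝ)..a, Real.sin θ := by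
      rw [← intervalIntegral.integral_const_mul]
      exact intervalIntegral.integral_mono_on ha0 ((hint 0 a).const_mul c) (hint' 0 a) hpt
    calc c * ∫ θ in (0:ℝ)..a, Real.sin θ ^ d ≤ ∫ θ in (0:ℝ)..a, Real.sin θ := this
      _ = 1 - x := by rw [integral_sin, Real.cos_zero, hcos]
  · -- large a : compare on [a, π/2]
    have hpt : ∀ θ ∈ Set.Icc a (π/2), Real.sin θ ≤ c * Real.sin θ ^ d := by
      intro θ hθ
      have hθs : 0 ≤ Real.sin θ :=
        Real.sin_nonneg_of_nonneg_of_le_pi (le_trans ha0 hθ.1) (by linarith [hθ.2, pi_pos.le])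
      have hθle : Real.sin a ≤ Real.sin θ :=
        Real.sin_le_sin_of_le_of_le_pi_div_two (by linarith [pi_pos.le]) hθ.2 hθ.1
      have hpow : Real.sin a ^ (d-1) ≤ Real.sin θ ^ (d-1) := pow_le_pow_left₀ hsina hθle _
      calc Real.sin θ = 1 * Real.sin θ := (one_mul _).symm
        _ ≤ (c * Real.sin θ ^ (d-1)) * Real.sin θ := by
            apply mul_le_mul_of_nonneg_right _ hθs
            calc (1:ℝ) ≤ c * Real.sin a ^ (d-1) := hcase.le
              _ ≤ c * Real.sin θ ^ (d-1) := mul_le_mul_of_nonneg_left hpow hcpos.le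
        _ = c * Real.sin θ ^ d := by
            rw [mul_assoc, ← pow_succ, Nat.sub_add_cancel hd]
    have hcompl : x ≤ c * ∫ θ in a..(π/2), Real.sin θ ^ d := by
      have : ∫ θ in a..(π/2), Real.sin θ ≤ ∫ θ in a..(π/2), c * Real.sin θ ^ d := by
        exact intervalIntegral.integral_mono_on ha2 (hint' a (π/2)) ((hint a (π/2)).const_mul c) hpt
      rw [intervalIntegral.integral_const_mul] at this
      calc x = Real.cos a - Real.cos (π/2) := by rw [Real.cos_pi_div_two, hcos]; ring
        _ = ∫ θ in a..(π/2), Real.sin θ := (integral_sin).symm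
        _ ≤ c * ∫ θ in a..(π/2), Real.sin θ ^ d := this
    have hsplit : (∫ θ in (0:ℝ)..a, Real.sin θ ^ d) + ∫ θ in a..(π/2), Real.sin θ ^ d
        = ∫ θ in (0:ℝ)..(π/2), Real.sin θ ^ d :=
      intervalIntegral.integral_add_adjacent_intervals (hint 0 a) (hint a (π/2))
    have : c * ∫ θ in (0:ℝ)..a, Real.sin θ ^ d
        = 1 - c * ∫ θ in a..(π/2), Real.sin θ ^ d := by
      rw [← hS, ← hsplit]; ring
    rw [this]
    linarith

private lemma key_eq (x : ℝ) (hx0 : 0 ≤ x) (hx1 : x ≤ 1) :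
    (2 * Real.Gamma (1 + (1:ℕ) / 2) / (Real.sqrt π * Real.Gamma (((1:ℕ) + 1) / 2))) *
      (∫ θ in (0:ℝ)..Real.arccos x, Real.sin θ ^ 1) = 1 - x := by
  have h32 : Real.Gamma (1 + ((1:ℕ):ℝ) / 2) = Real.sqrt π / 2 := by
    push_cast
    rw [show (1:ℝ) + 1/2 = 1/2 + 1 by ring, Real.Gamma_add_one (by norm_num),
      Real.Gamma_one_half_eq]
    ring
  have h1 : Real.Gamma ((((1:ℕ):ℝ) + 1) / 2) = 1 := by
    norm_num [Real.Gamma_one]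
  have hs : Real.sqrt π ≠ 0 := (Real.sqrt_pos.mpr pi_pos).ne'
  have hint : (∫ θ in (0:ℝ)..Real.arccos x, Real.sin θ ^ 1) = 1 - x := by
    simp only [pow_one]
    rw [integral_sin, Real.cos_zero, Real.cos_arccos (by linarith) hx1]
  rw [hint, h32, h1]
  field_simp

/-- In any dimension `d ≥ 1`, the scaled intersection volume satisfies
`α₂(r;R) ≤ 1 - r/(2R)` for `0 ≤ r ≤ 2R`, with equality in dimension `d = 1`. -/
theorem scaledIntersectionVol_le_linear (R : ℝ) (hR : 0 < R) :
    (∀ d : ℕ, 1 ≤ d → ∀ r : ℝ, 0 ≤ r → r ≤ 2 * R →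
        scaledIntersectionVol d r R ≤ 1 - r / (2 * R)) ∧
      (∀ r : ℝ, 0 ≤ r → r ≤ 2 * R → scaledIntersectionVol 1 r R = 1 - r / (2 * R)) := by
  constructor
  · intro d hd r hr0 hr2
    have hx0 : 0 ≤ r / (2 * R) := div_nonneg hr0 (by linarith)
    have hx1 : r / (2 * R) ≤ 1 := (div_le_one (by linarith)).mpr hr2
    exact key_le d hd (r / (2 * R)) hx0 hx1
  · intro r hr0 hr2
    have hx0 : 0 ≤ r / (2 * R) := div_nonneg hr0 (by linarith)
    have hx1 : r / (2 * R) ≤ 1 := (div_le_one (by linarith)).mpr hr2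
    exact key_eq (r / (2 * R)) hx0 hx1
end

section
/- The scaled intersection volume at contact α₂(R;R) satisfies the asymptotic behavior α₂(R;R) ~ (6/π)^{1/2} (3/4)^{d/2} d^{-1/2} as d → ∞; in particular α₂(R;R) · (4/3)^{d/2} d^{1/2} → (6/π)^{1/2}. -/
/-!
Write `I_d(a) = ∫₀^a sin^d`. The derivative of `sin^(d+1) θ / cos θ` is
`sin^d θ · (d + 1 + tan² θ)`, and `0 ≤ tan² θ ≤ tan² a` on `[0, a]`, so for `0 < a < π/2`
`(d + 1) I_d(a) ≤ sin^(d+1) a / cos a ≤ (d + 1 + tan² a) I_d(a)`, whence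
`d I_d(a) / sin^d a → tan a`.
The prefactor is `c(d) = 2 / I_d(π)` by the recursion shared by `Γ` and the Wallis integrals, and
Wallis' identity `I_d(π) I_{d+1}(π) = 2π / (d + 1)` together with monotonicity in `d` gives
`√d I_d(π) → √(2π)`. At `a = π/3` (`sin a = √3/2`, `tan a = √3`) the limit is `2√3 / √(2π) = √(6/π)`.
-/

open Real Filter

open intervalIntegral Topology Set

theorem hasDerivAt_sin_pow_succ_div_cos (n : ℕ) {θ : ℝ} (hθ : cos θ ≠ 0) :
    HasDerivAt (fun x => sin x ^ (n + 1) / cos x) (sin θ ^ n * (n + 1 + tan θ ^ 2)) θ := by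
  refine (((hasDerivAt_sin θ).pow (n + 1)).div (hasDerivAt_cos θ) hθ).congr_deriv ?_
  rw [tan_eq_sin_div_cos]
  simp only [Pi.pow_apply]
  field_simp
  push_cast
  ring

section IntegralSinPowToAcuteAngle

variable {a : ℝ}

theorem cos_ne_zero_of_mem_uIcc (ha₀ : -(π / 2) < a) (ha₁ : a < π / 2) {θ : ℝ}
    (hθ : θ ∈ uIcc 0 a) : cos θ ≠ 0 := by
  refine (cos_pos_of_mem_Ioo ?_).ne'
  rcases mem_uIcc.1 hθ with h | h <;> constructor <;> linarith [pi_pos, h.1, h.2]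

theorem intervalIntegrable_sin_pow_mul_add_tan_sq (n : ℕ) (ha₀ : -(π / 2) < a)
    (ha₁ : a < π / 2) :
    IntervalIntegrable (fun θ => sin θ ^ n * (n + 1 + tan θ ^ 2)) MeasureTheory.volume 0 a :=
  ((continuous_sin.pow n).continuousOn.mul (continuousOn_const.add
    ((continuousOn_tan.mono fun _ hθ => cos_ne_zero_of_mem_uIcc ha₀ ha₁ hθ).pow 2))).intervalIntegrable

theorem integral_sin_pow_mul_add_tan_sq (n : ℕ) (ha₀ : -(π / 2) < a) (ha₁ : a < π / 2) :
    ∫ θ in (0 : ℝ)..a, sin θ ^ n * (n + 1 + tan θ ^ 2) = sin a ^ (n + 1) / cos a := by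
  rw [integral_eq_sub_of_hasDerivAt
    (fun θ hθ => hasDerivAt_sin_pow_succ_div_cos n (cos_ne_zero_of_mem_uIcc ha₀ ha₁ hθ))
    (intervalIntegrable_sin_pow_mul_add_tan_sq n ha₀ ha₁)]
  simp

theorem natCast_add_one_mul_integral_sin_pow_le (n : ℕ) (ha₀ : 0 ≤ a) (ha₁ : a < π / 2) :
    (n + 1) * ∫ θ in (0 : ℝ)..a, sin θ ^ n ≤ sin a ^ (n + 1) / cos a := by
  have ha₀' : -(π / 2) < a := by linarith [pi_pos]
  rw [← integral_sin_pow_mul_add_tan_sq n ha₀' ha₁, ← integral_const_mul]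
  refine integral_mono_on ha₀ (Continuous.intervalIntegrable (by fun_prop) _ _)
    (intervalIntegrable_sin_pow_mul_add_tan_sq n ha₀' ha₁) fun θ hθ => ?_
  have hsin : 0 ≤ sin θ ^ n :=
    pow_nonneg (sin_nonneg_of_nonneg_of_le_pi hθ.1 (by linarith [pi_pos, hθ.2])) n
  nlinarith [sq_nonneg (tan θ)]

theorem sin_pow_succ_div_cos_le_mul_integral_sin_pow (n : ℕ) (ha₀ : 0 ≤ a) (ha₁ : a < π / 2) :
    sin a ^ (n + 1) / cos a ≤ (n + 1 + tan a ^ 2) * ∫ θ in (0 : ℝ)..a, sin θ ^ n := by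
  have ha₀' : -(π / 2) < a := by linarith [pi_pos]
  rw [← integral_sin_pow_mul_add_tan_sq n ha₀' ha₁, ← integral_const_mul]
  refine integral_mono_on ha₀ (intervalIntegrable_sin_pow_mul_add_tan_sq n ha₀' ha₁)
    (Continuous.intervalIntegrable (by fun_prop) _ _) fun θ hθ => ?_
  have hsin : 0 ≤ sin θ ^ n :=
    pow_nonneg (sin_nonneg_of_nonneg_of_le_pi hθ.1 (by linarith [pi_pos, hθ.2])) n
  have htan : tan θ ^ 2 ≤ tan a ^ 2 :=
    pow_le_pow_left₀ (tan_nonneg_of_nonneg_of_le_pi_div_two hθ.1 (by linarith [hθ.2]))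
      (strictMonoOn_tan.monotoneOn ⟨by linarith [hθ.1], by linarith [hθ.2]⟩ ⟨ha₀', ha₁⟩ hθ.2) 2
  nlinarith

theorem tendsto_natCast_mul_integral_sin_pow_div_sin_pow (ha₀ : 0 < a) (ha₁ : a < π / 2) :
    Tendsto (fun n : ℕ => n * (∫ θ in (0 : ℝ)..a, sin θ ^ n) / sin a ^ n) atTop
      (𝓝 (tan a)) := by
  have hsin : 0 < sin a := sin_pos_of_pos_of_lt_pi ha₀ (by linarith [pi_pos])
  have hcos : 0 < cos a := cos_pos_of_mem_Ioo ⟨by linarith [pi_pos], ha₁⟩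
  have hlim (x : ℝ) : Tendsto (fun n : ℕ => tan a * (n / (n + x))) atTop (𝓝 (tan a)) := by
    simpa using (tendsto_natCast_div_add_atTop x).const_mul (tan a)
  refine tendsto_of_tendsto_of_tendsto_of_le_of_le (hlim (1 + tan a ^ 2)) (hlim 1)
    (fun n => ?_) (fun n => ?_)
  · have hI := sin_pow_succ_div_cos_le_mul_integral_sin_pow n ha₀.le ha₁
    rw [le_div_iff₀ (pow_pos hsin n)]
    calc tan a * (n / (n + (1 + tan a ^ 2))) * sin a ^ n
        = n * (sin a ^ (n + 1) / cos a) / (n + 1 + tan a ^ 2) := by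
          rw [tan_eq_sin_div_cos]; ring
      _ ≤ n * ∫ θ in (0 : ℝ)..a, sin θ ^ n := by
          rw [div_le_iff₀ (by positivity), mul_assoc, mul_comm (∫ _ in _.._, _)]
          exact mul_le_mul_of_nonneg_left hI n.cast_nonneg
  · have hI := natCast_add_one_mul_integral_sin_pow_le n ha₀.le ha₁
    rw [div_le_iff₀ (pow_pos hsin n)]
    calc n * ∫ θ in (0 : ℝ)..a, sin θ ^ n
        ≤ n * (sin a ^ (n + 1) / cos a) / (n + 1) := by
          rw [le_div_iff₀ (by positivity), mul_assoc, mul_comm (∫ _ in _.._, _)]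
          exact mul_le_mul_of_nonneg_left hI n.cast_nonneg
      _ = tan a * (n / (n + 1)) * sin a ^ n := by
          rw [tan_eq_sin_div_cos]; ring

end IntegralSinPowToAcuteAngle

theorem integral_sin_pow_add_two (n : ℕ) :
    ∫ x in (0 : ℝ)..π, sin x ^ (n + 2) = (n + 1) / (n + 2) * ∫ x in (0 : ℝ)..π, sin x ^ n := by
  simp [integral_sin_pow]

theorem integral_sin_pow_mul_integral_sin_pow_succ (n : ℕ) :
    (∫ x in (0 : ℝ)..π, sin x ^ n) * (∫ x in (0 : ℝ)..π, sin x ^ (n + 1)) = 2 * π / (n + 1) := by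
  induction n with
  | zero => simp; ring
  | succ n ih =>
    rw [integral_sin_pow_add_two, mul_left_comm, mul_comm (∫ x in (0 : ℝ)..π, sin x ^ (n + 1)),
      ih]
    push_cast
    field_simp
    ring

theorem tendsto_sqrt_mul_integral_sin_pow :
    Tendsto (fun n : ℕ => √n * ∫ x in (0 : ℝ)..π, sin x ^ n) atTop (𝓝 (√(2 * π))) := by
  set S : ℕ → ℝ := fun n => ∫ x in (0 : ℝ)..π, sin x ^ n
  suffices Tendsto (fun n : ℕ => n * S n ^ 2) atTop (𝓝 (2 * π)) by
    refine ((continuous_sqrt.tendsto _).comp this).congr fun n => ?_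
    rw [Function.comp_apply, sqrt_mul n.cast_nonneg, sqrt_sq (integral_sin_pow_pos n).le]
  have hlower (n : ℕ) : 2 * π * (n / (n + 1)) ≤ n * S n ^ 2 :=
    calc 2 * π * (n / (n + 1)) = n * (S n * S (n + 1)) := by
          rw [integral_sin_pow_mul_integral_sin_pow_succ]; ring
      _ ≤ n * S n ^ 2 := by
          rw [sq]
          gcongr
          · exact (integral_sin_pow_pos n).le
          · exact integral_sin_pow_succ_le n
  have hupper : ∀ n : ℕ, n * S n ^ 2 ≤ 2 * π
    | 0 => by simp [pi_pos.le]
    | n + 1 =>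
      calc ((n + 1 : ℕ) : ℝ) * S (n + 1) ^ 2 ≤ (n + 1) * (S n * S (n + 1)) := by
            push_cast
            rw [sq]
            gcongr
            · exact (integral_sin_pow_pos _).le
            · exact integral_sin_pow_succ_le n
        _ = 2 * π := by rw [integral_sin_pow_mul_integral_sin_pow_succ]; field_simp
  refine tendsto_of_tendsto_of_tendsto_of_le_of_le ?_ tendsto_const_nhds hlower hupper
  simpa using (tendsto_natCast_div_add_atTop (1 : ℝ)).const_mul (2 * π)

theorem sqrt_pi_mul_Gamma_eq_Gamma_mul_integral_sin_pow (n : ℕ) :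
    √π * Gamma ((n + 1) / 2) = Gamma (1 + n / 2) * ∫ x in (0 : ℝ)..π, sin x ^ n := by
  induction n using Nat.twoStepInduction with
  | zero => norm_num [Gamma_one_half_eq, mul_self_sqrt pi_pos.le]
  | one =>
    rw [show ((1 : ℕ) + 1 : ℝ) / 2 = 1 by norm_num,
      show 1 + ((1 : ℕ) : ℝ) / 2 = 1 / 2 + 1 by norm_num, Gamma_add_one (by norm_num),
      Gamma_one_half_eq]
    simp only [pow_one, integral_sin, cos_zero, cos_pi, Gamma_one]
    ring
  | more n ih _ =>
    rw [integral_sin_pow_add_two]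
    push_cast
    rw [show ((n : ℝ) + 2 + 1) / 2 = (n + 1) / 2 + 1 by ring,
      show 1 + ((n : ℝ) + 2) / 2 = (1 + n / 2) + 1 by ring, Gamma_add_one (by positivity),
      Gamma_add_one (by positivity), mul_left_comm, ih]
    field_simp
    ring

theorem scaledIntersectionVol_eq (d : ℕ) (r R : ℝ) :
    scaledIntersectionVol d r R =
      2 / (∫ x in (0 : ℝ)..π, sin x ^ d) * ∫ θ in (0 : ℝ)..arccos (r / (2 * R)), sin θ ^ d := by
  have hΓ : Gamma (1 + d / 2) ≠ 0 := (Gamma_pos_of_pos (by positivity)).ne'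
  rw [scaledIntersectionVol, sqrt_pi_mul_Gamma_eq_Gamma_mul_integral_sin_pow,
    mul_comm (Gamma _), mul_div_mul_right _ _ hΓ]

theorem four_div_three_rpow_half_natCast (d : ℕ) :
    (4 / 3 : ℝ) ^ ((d : ℝ) / 2) = (sin (π / 3) ^ d)⁻¹ := by
  rw [div_eq_mul_inv (d : ℝ), mul_comm, rpow_mul (by norm_num), rpow_natCast, ← inv_pow,
    ← one_div, ← sqrt_eq_rpow, sin_pi_div_three, inv_div, sqrt_div (by norm_num),
    show (4 : ℝ) = 2 ^ 2 by norm_num, sqrt_sq zero_le_two]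

/-- The scaled intersection volume at contact satisfies
`α₂(R;R) ~ (6/π)^{1/2} (3/4)^{d/2} d^{-1/2}` as `d → ∞`; equivalently,
`α₂(R;R) · (4/3)^{d/2} · d^{1/2} → (6/π)^{1/2}`. -/
theorem scaledIntersectionVol_contact_asymptotics (R : ℝ) (hR : 0 < R) :
    Tendsto (fun d : ℕ =>
        scaledIntersectionVol d R R * (4 / 3 : ℝ) ^ ((d : ℝ) / 2) * Real.sqrt d)
      atTop (nhds (Real.sqrt (6 / π))) := by
  have harccos : arccos (R / (2 * R)) = π / 3 := by
    rw [div_mul_cancel_right₀ hR.ne', inv_eq_one_div, ← cos_pi_div_three,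
      arccos_cos (by positivity) (by linarith [pi_pos])]
  have hlimit : 2 * tan (π / 3) / √(2 * π) = √(6 / π) := by
    rw [show 6 / π = (2 * tan (π / 3)) ^ 2 / (2 * π) by
        rw [tan_pi_div_three, mul_pow, sq_sqrt zero_le_three]; field_simp; norm_num,
      sqrt_div (sq_nonneg _), sqrt_sq (by rw [tan_pi_div_three]; positivity)]
  have htendsto := ((tendsto_natCast_mul_integral_sin_pow_div_sin_pow (a := π / 3)
    (by positivity) (by linarith [pi_pos])).const_mul 2).div tendsto_sqrt_mul_integral_sin_pow
    (by positivity)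
  rw [← hlimit]
  refine htendsto.congr fun d => ?_
  rw [Pi.div_apply, scaledIntersectionVol_eq, harccos, four_div_three_rpow_half_natCast]
  rcases d.eq_zero_or_pos with rfl | hd
  · simp
  · have hS := integral_sin_pow_pos d
    have hsin : 0 < sin (π / 3) := by rw [sin_pi_div_three]; positivity
    field_simp
    rw [sq_sqrt d.cast_nonneg]
    ring
end
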